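/- For all positive integers L and integers a, the identity ∑_{k≥0} W_{L,k}(q) · [2k choose k−a]_q = q^{2a^2} · [2L choose L−2a]_q holds, where W_{L,k}(q) = ∑_{m=0}^{L} q^{k^2+(m+k)^2} [L choose m]_q [L−m choose 2k]_q. -/

import Mathlib

/-!
With integer indices, and `[m, n]_q = 0` outside `0 ≤ n ≤ m`, the `q`-binomial identities below
hold without side conditions, so sums can be taken over all of `ℤ`.

Both sides are evaluated as the same double sum. On the left, the trinomial revision
`[L, m] [L-m, 2k] [2k, k+a] = [L, v] [v, k+a] [L-v, k-a]` with `v = m + k + a` turns the sum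
into `∑_{k,v} q^{k²+(v-a)²} [L, v] [v, k+a] [L-v, k-a]`. Summing over `k` first, the
`q`-Chu–Vandermonde identity in the balanced form
`∑_k q^{k²-a²} [M, k+a] [N, k-a] = [M+N, M-2a]` leaves `∑_v q^{(v-a)²+a²} [L, v] [L, v-2a]`,
and the same identity with `M = N = L` (after `v = k + a`) gives `q^{2a²} [2L, L-2a]`.
-/

open LaurentPolynomial Finset

noncomputable section

/-- The Gaussian binomial coefficient `[m choose n]_q` as a polynomial in `q`,
defined via the `q`-Pascal recurrence; it equals `(q;q)_m/((q;q)_n (q;q)_{m-n})`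
for `0 ≤ n ≤ m`. -/
def gb : ℕ → ℕ → Polynomial ℤ
  | _, 0 => 1
  | 0, _ + 1 => 0
  | m + 1, n + 1 => gb m n + Polynomial.X ^ (n + 1) * gb m (n + 1)

/-- `[m choose n]_q` with integer indices, zero unless `0 ≤ n ≤ m`,
viewed as a Laurent polynomial in `q`. -/
def qbin (m n : ℤ) : LaurentPolynomial ℤ :=
  if 0 ≤ n ∧ n ≤ m then (gb m.toNat n.toNat).toLaurent else 0

/-- A Laurent polynomial is a polynomial in `q` with nonnegative coefficients. -/
def IsNonneg (x : LaurentPolynomial ℤ) : Prop :=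
  ∃ P : Polynomial ℤ, (∀ n, 0 ≤ P.coeff n) ∧ P.toLaurent = x

/-- The triangular number `T(j) = j(j+1)/2`. -/
def tri (j : ℤ) : ℤ := j * (j + 1) / 2

/-- `W_{L,k}(q) = ∑_{m=0}^{L} q^{k²+(m+k)²} [L choose m]_q [L-m choose 2k]_q`. -/
def Wpoly (L k : ℕ) : LaurentPolynomial ℤ :=
  ∑ m ∈ Finset.range (L + 1),
    T ((k : ℤ) ^ 2 + ((m : ℤ) + k) ^ 2) * (gb L m).toLaurent * (gb (L - m) (2 * k)).toLaurent

lemma finsum_natCast_eq {M : Type*} [AddCommMonoid M] {g : ℤ → M} (hg : ∀ k < 0, g k = 0) :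
    ∑ᶠ k : ℕ, g k = ∑ᶠ k : ℤ, g k := by
  rw [← finsum_mem_range Nat.cast_injective, ← finsum_mem_univ g]
  refine finsum_mem_inter_support_eq' g _ _ fun k hk => ?_
  simp only [Set.mem_range, Set.mem_univ, iff_true]
  exact ⟨k.toNat, Int.toNat_of_nonneg (not_lt.1 (mt (hg k) hk))⟩

lemma finsum_comm_of_hasFiniteSupport {α β M : Type*} [AddCommMonoid M] (f : α → β → M)
    (hf : Function.HasFiniteSupport (Function.uncurry f)) :
    ∑ᶠ (a) (b), f a b = ∑ᶠ (b) (a), f a b := by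
  calc ∑ᶠ (a) (b), f a b = ∑ᶠ p, Function.uncurry f p := (finsum_curry _ hf).symm
    _ = ∑ᶠ p : β × α, Function.uncurry f p.swap :=
      (finsum_comp_equiv (Equiv.prodComm β α)).symm
    _ = ∑ᶠ (b) (a), f a b := finsum_curry _ (hf.preimage Prod.swap_injective.injOn)

lemma gb_eq_zero_of_lt : ∀ {m n : ℕ}, m < n → gb m n = 0
  | 0, _ + 1, _ => rfl
  | m + 1, n + 1, h => by
    rw [gb, gb_eq_zero_of_lt (by omega : m < n), gb_eq_zero_of_lt (by omega : m < n + 1)]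
    ring

lemma gb_self : ∀ m : ℕ, gb m m = 1
  | 0 => rfl
  | m + 1 => by rw [gb, gb_self m, gb_eq_zero_of_lt (Nat.lt_succ_self m)]; ring

def qPochhammer (n : ℕ) : Polynomial ℤ := ∏ i ∈ range n, (1 - Polynomial.X ^ (i + 1))

lemma qPochhammer_succ (n : ℕ) :
    qPochhammer (n + 1) = qPochhammer n * (1 - Polynomial.X ^ (n + 1)) :=
  prod_range_succ _ _

lemma qPochhammer_ne_zero (n : ℕ) : qPochhammer n ≠ 0 :=
  prod_ne_zero_iff.2 fun i _ h => by
    simpa [Polynomial.coeff_X_pow] using congrArg (Polynomial.coeff · 0) h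

lemma gb_add_mul_qPochhammer :
    ∀ m n : ℕ, gb (m + n) m * (qPochhammer m * qPochhammer n) = qPochhammer (m + n)
  | 0, n => by simp [gb, qPochhammer]
  | m + 1, 0 => by simp [gb_self, qPochhammer]
  | m + 1, n + 1 => by
    have h₁ := gb_add_mul_qPochhammer m (n + 1)
    have h₂ := gb_add_mul_qPochhammer (m + 1) n
    rw [show m + (n + 1) = m + n + 1 by omega, qPochhammer_succ n] at h₁
    rw [show m + 1 + n = m + n + 1 by omega, qPochhammer_succ m] at h₂
    rw [show m + 1 + (n + 1) = m + n + 1 + 1 by omega, gb, qPochhammer_succ m,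
      qPochhammer_succ n, qPochhammer_succ (m + n + 1)]
    -- `(1 - q^{m+1}) + q^{m+1} (1 - q^{n+1}) = 1 - q^{m+n+2}`
    linear_combination (1 - Polynomial.X ^ (m + 1)) * h₁ +
      Polynomial.X ^ (m + 1) * (1 - Polynomial.X ^ (n + 1)) * h₂

lemma gb_add_comm (m n : ℕ) : gb (m + n) m = gb (m + n) n := by
  apply mul_right_cancel₀ (mul_ne_zero (qPochhammer_ne_zero m) (qPochhammer_ne_zero n))
  have h := gb_add_mul_qPochhammer n m
  rw [add_comm n m] at h
  rw [gb_add_mul_qPochhammer, ← h]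
  ring

lemma gb_mul_gb_add (c d e : ℕ) :
    gb (c + d + e) (c + d) * gb (c + d) c = gb (c + d + e) c * gb (d + e) d := by
  apply mul_right_cancel₀ (mul_ne_zero (mul_ne_zero (qPochhammer_ne_zero c)
    (qPochhammer_ne_zero d)) (qPochhammer_ne_zero e))
  have h₁ := gb_add_mul_qPochhammer (c + d) e
  have h₂ := gb_add_mul_qPochhammer c d
  have h₃ := gb_add_mul_qPochhammer c (d + e)
  have h₄ := gb_add_mul_qPochhammer d e
  rw [← add_assoc] at h₃
  linear_combination gb (c + d + e) (c + d) * qPochhammer e * h₂ + h₁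
    - gb (c + d + e) c * qPochhammer c * h₄ - h₃

lemma qbin_natCast (m n : ℕ) : qbin m n = (gb m n).toLaurent := by
  unfold qbin
  split_ifs with h
  · simp
  · rw [gb_eq_zero_of_lt (by omega), map_zero]

lemma qbin_eq_zero_of_notMem {m n : ℤ} (h : n ∉ Set.Icc 0 m) : qbin m n = 0 := if_neg h

lemma mem_Icc_of_qbin_ne_zero {m n : ℤ} (h : qbin m n ≠ 0) : n ∈ Set.Icc 0 m :=
  not_imp_comm.1 qbin_eq_zero_of_notMem h

lemma qbin_of_neg {m n : ℤ} (h : n < 0) : qbin m n = 0 :=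
  qbin_eq_zero_of_notMem fun hn => h.not_ge hn.1

lemma qbin_zero_right {m : ℤ} (h : 0 ≤ m) : qbin m 0 = 1 := by
  rw [qbin, if_pos ⟨le_rfl, h⟩, Int.toNat_zero, gb, Polynomial.toLaurent_one]

lemma qbin_sub_right (m n : ℤ) : qbin m (m - n) = qbin m n := by
  by_cases h : n ∈ Set.Icc 0 m
  · obtain ⟨c, rfl⟩ := Int.eq_ofNat_of_zero_le h.1
    obtain ⟨d, hd⟩ := Int.eq_ofNat_of_zero_le (sub_nonneg.2 h.2)
    obtain rfl : m = ((c + d : ℕ) : ℤ) := by push_cast; omega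
    rw [show ((c + d : ℕ) : ℤ) - c = d by push_cast; ring, qbin_natCast, qbin_natCast,
      gb_add_comm]
  · rw [qbin_eq_zero_of_notMem h, qbin_eq_zero_of_notMem]
    simp only [Set.mem_Icc] at h ⊢
    omega

lemma qbin_mul_qbin (N c d : ℤ) :
    qbin N (c + d) * qbin (c + d) c = qbin N c * qbin (N - c) d := by
  by_cases h : 0 ≤ c ∧ 0 ≤ d ∧ c + d ≤ N
  · obtain ⟨c, rfl⟩ := Int.eq_ofNat_of_zero_le h.1
    obtain ⟨d, rfl⟩ := Int.eq_ofNat_of_zero_le h.2.1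
    obtain ⟨e, he⟩ := Int.eq_ofNat_of_zero_le (sub_nonneg.2 h.2.2)
    obtain rfl : N = ((c + d + e : ℕ) : ℤ) := by push_cast; omega
    rw [show ((c + d + e : ℕ) : ℤ) - c = ((d + e : ℕ) : ℤ) by push_cast; ring,
      show (c : ℤ) + d = ((c + d : ℕ) : ℤ) by push_cast; rfl]
    simp only [qbin_natCast, ← map_mul, gb_mul_gb_add]
  · unfold qbin
    split_ifs <;> first | omega | simp

lemma qbin_succ (m : ℕ) (n : ℤ) : qbin (m + 1) n = qbin m (n - 1) + T n * qbin m n := by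
  rcases lt_or_ge n 0 with hn | hn
  · rw [qbin_of_neg hn, qbin_of_neg hn, qbin_of_neg (by omega), mul_zero, add_zero]
  obtain ⟨n, rfl⟩ := Int.eq_ofNat_of_zero_le hn
  cases n with
  | zero =>
    rw [Nat.cast_zero, zero_sub, qbin_of_neg (n := -1) (by norm_num), T_zero, one_mul, zero_add,
      qbin_zero_right (by positivity), qbin_zero_right (by positivity)]
  | succ n =>
    rw [show (m : ℤ) + 1 = ((m + 1 : ℕ) : ℤ) by push_cast; rfl,
      show ((n + 1 : ℕ) : ℤ) - 1 = n by push_cast; ring, qbin_natCast, qbin_natCast,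
      qbin_natCast, gb, map_add, map_mul, Polynomial.toLaurent_X_pow]

lemma hasFiniteSupport_of_qbin {R : Type*} [Zero R] {f : ℤ → R} (N : ℤ)
    (hf : ∀ j, qbin N j = 0 → f j = 0) : Function.HasFiniteSupport f :=
  (Set.finite_Icc 0 N).subset fun j hj => mem_Icc_of_qbin_ne_zero (mt (hf j) hj)

theorem qbin_add_eq_finsum (M N : ℕ) (r : ℤ) :
    qbin (M + N) r = ∑ᶠ j : ℤ, T (j * (M - r + j)) * qbin M (r - j) * qbin N j := by
  induction M generalizing r with
  | zero =>
    rw [finsum_eq_single _ r fun j hj => by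
      rw [qbin_eq_zero_of_notMem fun h => hj (by simp at h; omega), mul_zero, zero_mul]]
    simp [qbin_zero_right]
  | succ M ih =>
    rw [show ((M + 1 : ℕ) : ℤ) + N = ((M + N : ℕ) : ℤ) + 1 by push_cast; ring, qbin_succ]
    push_cast
    rw [ih, ih, mul_finsum, ← finsum_add_distrib]
    · refine finsum_congr fun j => ?_
      rw [qbin_succ, show r - j - 1 = r - 1 - j by ring]
      simp only [← T_add, mul_add, add_mul, ← mul_assoc]
      ring_nf
    all_goals exact hasFiniteSupport_of_qbin N fun j h => by simp [h]

theorem qbin_add_eq_finsum_sq_sub_sq (M N a : ℤ) (hM : 0 ≤ M) (hN : 0 ≤ N) :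
    qbin (M + N) (M - 2 * a) =
      ∑ᶠ k : ℤ, T (k ^ 2 - a ^ 2) * qbin M (k + a) * qbin N (k - a) := by
  lift M to ℕ using hM
  lift N to ℕ using hN
  rw [qbin_add_eq_finsum, ← finsum_comp_equiv (Equiv.subRight a)]
  refine finsum_congr fun k => ?_
  rw [Equiv.subRight_apply, ← qbin_sub_right M (k + a),
    show (k - a) * (M - (M - 2 * a) + (k - a)) = k ^ 2 - a ^ 2 by ring,
    show M - 2 * a - (k - a) = M - (k + a) by ring]

lemma Wpoly_eq_finsum (L k : ℕ) :
    Wpoly L k = ∑ᶠ m : ℤ, T (k ^ 2 + (m + k) ^ 2) * qbin L m * qbin (L - m) (2 * k) := by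
  rw [← finsum_natCast_eq fun m hm => by rw [qbin_of_neg hm, mul_zero, zero_mul],
    finsum_eq_sum_of_support_subset (s := range (L + 1)), Wpoly]
  · refine sum_congr rfl fun m hm => ?_
    rw [qbin_natCast, ← Nat.cast_sub (mem_range_succ_iff.1 hm),
      show (2 : ℤ) * k = ((2 * k : ℕ) : ℤ) by push_cast; rfl, qbin_natCast]
  · intro m hm
    have := mem_Icc_of_qbin_ne_zero (right_ne_zero_of_mul (left_ne_zero_of_mul hm))
    rw [coe_range, Set.mem_Iio]
    exact_mod_cast Nat.lt_succ_of_le (by exact_mod_cast this.2)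

def warnaarTerm (L a k v : ℤ) : LaurentPolynomial ℤ :=
  T (k ^ 2 + (v - a) ^ 2) * qbin L v * qbin v (k + a) * qbin (L - v) (k - a)

lemma mul_qbin_eq_warnaarTerm (L a k m : ℤ) :
    T (k ^ 2 + (m + k) ^ 2) * qbin L m * qbin (L - m) (2 * k) * qbin (2 * k) (k - a) =
      warnaarTerm L a k (m + (k + a)) := by
  have h₁ : qbin (L - m) (2 * k) * qbin (2 * k) (k - a) =
      qbin (L - m) (k + a) * qbin (L - m - (k + a)) (k - a) := by
    rw [show 2 * k = k + a + (k - a) by ring, ← qbin_sub_right (k + a + (k - a)) (k - a),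
      add_sub_cancel_right, qbin_mul_qbin]
  have h₂ : qbin L m * qbin (L - m) (k + a) =
      qbin L (m + (k + a)) * qbin (m + (k + a)) (k + a) := by
    rw [← qbin_mul_qbin, ← qbin_sub_right (m + (k + a)) m, add_sub_cancel_left]
  rw [warnaarTerm, show m + (k + a) - a = m + k by ring,
    show L - (m + (k + a)) = L - m - (k + a) by ring]
  linear_combination T (k ^ 2 + (m + k) ^ 2) * qbin L m * h₁
    + T (k ^ 2 + (m + k) ^ 2) * qbin (L - m - (k + a)) (k - a) * h₂

lemma Wpoly_mul_qbin_eq_finsum (L k : ℕ) (a : ℤ) :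
    Wpoly L k * qbin (2 * k) (k - a) = ∑ᶠ v : ℤ, warnaarTerm L a k v := by
  rw [Wpoly_eq_finsum, finsum_mul]
  conv_rhs => rw [← finsum_comp_equiv (Equiv.addRight ((k : ℤ) + a))]
  exact finsum_congr fun m => mul_qbin_eq_warnaarTerm L a k m

lemma warnaarTerm_of_neg (L a v : ℤ) {k : ℤ} (hk : k < 0) : warnaarTerm L a k v = 0 := by
  rcases lt_or_ge (k + a) 0 with h | h
  · rw [warnaarTerm, qbin_of_neg h, mul_zero, zero_mul]
  · rw [warnaarTerm, qbin_of_neg (by omega : k - a < 0), mul_zero]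

lemma hasFiniteSupport_warnaarTerm (L a : ℤ) :
    Function.HasFiniteSupport (Function.uncurry (warnaarTerm L a)) :=
  ((Set.finite_Icc (-a) (L - a)).prod (Set.finite_Icc 0 L)).subset fun ⟨k, v⟩ h => by
    have h' := left_ne_zero_of_mul (Function.mem_support.1 h)
    have hk := mem_Icc_of_qbin_ne_zero (right_ne_zero_of_mul h')
    have hv := mem_Icc_of_qbin_ne_zero (right_ne_zero_of_mul (left_ne_zero_of_mul h'))
    simp only [Set.mem_prod, Set.mem_Icc] at hk hv ⊢
    omega

lemma finsum_warnaarTerm (L a v : ℤ) :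
    ∑ᶠ k : ℤ, warnaarTerm L a k v =
      T ((v - a) ^ 2 + a ^ 2) * qbin L v * qbin L (v - 2 * a) := by
  by_cases hv : v ∈ Set.Icc 0 L
  · have h := qbin_add_eq_finsum_sq_sub_sq v (L - v) a hv.1 (sub_nonneg.2 hv.2)
    rw [add_sub_cancel] at h
    rw [h, mul_finsum]
    refine finsum_congr fun k => ?_
    rw [warnaarTerm, show k ^ 2 + (v - a) ^ 2 = (v - a) ^ 2 + a ^ 2 + (k ^ 2 - a ^ 2) by ring,
      T_add]
    ring
  · simp [warnaarTerm, qbin_eq_zero_of_notMem hv]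

lemma T_mul_qbin_eq_finsum (L a : ℤ) (hL : 0 ≤ L) :
    T (2 * a ^ 2) * qbin (2 * L) (L - 2 * a) =
      ∑ᶠ v : ℤ, T ((v - a) ^ 2 + a ^ 2) * qbin L v * qbin L (v - 2 * a) := by
  rw [two_mul L, qbin_add_eq_finsum_sq_sub_sq L L a hL hL, mul_finsum]
  conv_rhs => rw [← finsum_comp_equiv (Equiv.addRight a)]
  refine finsum_congr fun k => ?_
  rw [Equiv.coe_addRight, add_sub_cancel_right, show k + a - 2 * a = k - a by ring,
    show k ^ 2 + a ^ 2 = 2 * a ^ 2 + (k ^ 2 - a ^ 2) by ring, T_add]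
  ring

theorem warnaar_transformation_general (L : ℕ) (a : ℤ) :
    ∑ᶠ k : ℕ, Wpoly L k * qbin (2 * k) ((k : ℤ) - a) =
      T (2 * a ^ 2) * qbin (2 * L) ((L : ℤ) - 2 * a) := by
  calc ∑ᶠ k : ℕ, Wpoly L k * qbin (2 * k) ((k : ℤ) - a)
      = ∑ᶠ (k : ℕ) (v : ℤ), warnaarTerm L a k v :=
        finsum_congr fun k => Wpoly_mul_qbin_eq_finsum L k a
    _ = ∑ᶠ (k : ℤ) (v : ℤ), warnaarTerm L a k v :=
        finsum_natCast_eq fun _ hk => finsum_eq_zero_of_forall_eq_zero fun v =>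
          warnaarTerm_of_neg L a v hk
    _ = ∑ᶠ (v : ℤ) (k : ℤ), warnaarTerm L a k v :=
        finsum_comm_of_hasFiniteSupport _ (hasFiniteSupport_warnaarTerm L a)
    _ = ∑ᶠ v : ℤ, T ((v - a) ^ 2 + a ^ 2) * qbin L v * qbin L (v - 2 * a) :=
        finsum_congr fun v => finsum_warnaarTerm L a v
    _ = T (2 * a ^ 2) * qbin (2 * L) ((L : ℤ) - 2 * a) :=
        (T_mul_qbin_eq_finsum L a (Nat.cast_nonneg L)).symm

/-- Warnaar's transformation:
`∑_{k ≥ 0} W_{L,k}(q) [2k choose k-a]_q = q^{2a²} [2L choose L-2a]_q`. -/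
theorem warnaar_transformation (L : ℕ) (hL : 0 < L) (a : ℤ) :
    ∑ᶠ k : ℕ, Wpoly L k * qbin (2 * k) ((k : ℤ) - a) =
      T (2 * a ^ 2) * qbin (2 * L) ((L : ℤ) - 2 * a) :=
  warnaar_transformation_general L a
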